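/- If f : ℝ → ℂ is 1-periodic with absolutely convergent Fourier series f(x) = ∑_{m ∈ ℤ} c_m exp(2πi m x) and |c_m| ≤ C ρ^{-|m|} for some C > 0 and ρ > 1, then the trapezoidal-rule error satisfies |T_n(f) − c_0| ≤ 2C ρ^{-n}/(1 − ρ^{-n}) for all n ≥ 1, i.e., the error decays exponentially in n. -/

import Mathlib

/-!
Averaging `exp (2πimx)` over the nodes `x = k/n` gives `1` when `n ∣ m` and `0` otherwise, so
`T_n f` is the sum of the aliased coefficients `c (n * j)`; this only adds finitely many convergent
series, so no absolute convergence is needed. Dropping `j = 0` leaves `T_n f - c 0`, and the decay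
hypothesis bounds `‖c (n * j)‖` by `C (ρ⁻¹ ^ n) ^ |j|`, whose sum over `j ≠ 0` is two geometric tails.
-/

open Finset

open Complex in
theorem sum_range_exp_two_pi_I_int_mul_div (n : ℕ) (hn : n ≠ 0) (m : ℤ) :
    ∑ k ∈ range n, exp (2 * Real.pi * I * m * ((k : ℝ) / n : ℝ)) =
      if (n : ℤ) ∣ m then (n : ℂ) else 0 := by
  set ζ := exp (2 * Real.pi * I / n)
  have hζ : IsPrimitiveRoot ζ n := isPrimitiveRoot_exp n hn
  have hterm : ∀ k : ℕ, exp (2 * Real.pi * I * m * ((k : ℝ) / n : ℝ)) = (ζ ^ m) ^ k := by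
    intro k
    rw [← exp_int_mul, ← exp_nat_mul]
    push_cast
    ring_nf
  simp only [hterm]
  split_ifs with hdvd
  · simp [(hζ.zpow_eq_one_iff_dvd m).mpr hdvd]
  · have hζm : (ζ ^ m) ^ n = 1 := by
      rw [← zpow_natCast, ← zpow_mul]
      exact (hζ.zpow_eq_one_iff_dvd _).mpr (dvd_mul_left _ _)
    rw [geom_sum_eq (mt (hζ.zpow_eq_one_iff_dvd m).mp hdvd), hζm, sub_self, zero_div]

theorem hasSum_int_pow_natAbs {r : ℝ} (hr₀ : 0 ≤ r) (hr₁ : r < 1) :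
    HasSum (fun j : ℤ => r ^ j.natAbs) ((1 + r) / (1 - r)) := by
  have hgeom := hasSum_geometric_of_lt_one hr₀ hr₁
  have hneg : HasSum (fun k : ℕ => r ^ (-((k : ℤ) + 1)).natAbs) (r * (1 - r)⁻¹) := by
    simpa only [show ∀ k : ℕ, (-((k : ℤ) + 1)).natAbs = k + 1 from fun k => by omega, pow_succ']
      using hgeom.mul_left r
  have h := HasSum.of_nat_of_neg_add_one (f := fun j : ℤ => r ^ j.natAbs) hgeom hneg
  convert h using 1
  field_simp [sub_ne_zero.mpr hr₁.ne']

theorem hasSum_int_pow_natAbs_update_zero {r : ℝ} (hr₀ : 0 ≤ r) (hr₁ : r < 1) :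
    HasSum (Function.update (fun j : ℤ => r ^ j.natAbs) 0 0) (2 * r / (1 - r)) := by
  have h := (hasSum_int_pow_natAbs hr₀ hr₁).update 0 0
  rwa [Int.natAbs_zero, pow_zero, zero_sub, neg_add_eq_sub,
    div_sub_one (sub_ne_zero.mpr hr₁.ne'), add_sub_sub_cancel, ← two_mul] at h

noncomputable def trapezoidRule (n : ℕ) (f : ℝ → ℂ) : ℂ :=
  (1 / (n : ℂ)) * ∑ k ∈ range n, f ((k : ℝ) / n)

theorem hasSum_trapezoidRule_of_hasSum_fourier {f : ℝ → ℂ} {c : ℤ → ℂ}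
    (hsum : ∀ x : ℝ,
      HasSum (fun m : ℤ => c m * Complex.exp (2 * Real.pi * Complex.I * m * x)) (f x))
    {n : ℕ} (hn : n ≠ 0) :
    HasSum (fun j : ℤ => c (n * j)) (trapezoidRule n f) := by
  have hsamples :=
    (hasSum_sum fun k (_ : k ∈ range n) => hsum ((k : ℝ) / n)).mul_left (1 / (n : ℂ))
  have haliased : HasSum (fun m : ℤ => if (n : ℤ) ∣ m then c m else 0) (trapezoidRule n f) := by
    refine hsamples.congr_fun fun m => ?_
    rw [← mul_sum, sum_range_exp_two_pi_I_int_mul_div n hn m]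
    split_ifs
    · field_simp
    · simp
  have hinj : Function.Injective fun j : ℤ => (n : ℤ) * j :=
    mul_right_injective₀ (by exact_mod_cast hn)
  convert (hinj.hasSum_iff ?_).mpr haliased using 1
  · ext j
    simp
  · rintro m hm
    rw [if_neg fun ⟨j, hj⟩ => hm ⟨j, hj.symm⟩]

theorem trapezoidal_exponential_convergence_general (f : ℝ → ℂ) (c : ℤ → ℂ) (C ρ : ℝ)
    (hρ : 1 < ρ)
    (hsum : ∀ x : ℝ, HasSum (fun m : ℤ => c m * Complex.exp (2 * Real.pi * Complex.I * m * x)) (f x))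
    (hdecay : ∀ m : ℤ, ‖c m‖ ≤ C * ρ⁻¹ ^ m.natAbs)
    (n : ℕ) (hn : 1 ≤ n) :
    ‖(1 / (n : ℂ)) * (∑ k ∈ Finset.range n, f ((k : ℝ) / n)) - c 0‖
      ≤ 2 * C * ρ⁻¹ ^ n / (1 - ρ⁻¹ ^ n) := by
  show ‖trapezoidRule n f - c 0‖ ≤ _
  have hn₀ : n ≠ 0 := by omega
  have hr₀ : 0 ≤ ρ⁻¹ ^ n := by positivity
  have hr₁ : ρ⁻¹ ^ n < 1 := pow_lt_one₀ (by positivity) (inv_lt_one_of_one_lt₀ hρ) hn₀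
  have hT := (hasSum_trapezoidRule_of_hasSum_fourier hsum hn₀).update 0 0
  have hbound := (hasSum_int_pow_natAbs_update_zero hr₀ hr₁).mul_left C
  rw [mul_zero, zero_sub, neg_add_eq_sub] at hT
  rw [mul_comm 2 C, mul_assoc, mul_div_assoc]
  refine hT.norm_le_of_bounded hbound fun j => ?_
  rcases eq_or_ne j 0 with rfl | hj
  · simp
  · simpa [hj, Int.natAbs_mul, pow_mul] using hdecay (n * j)

/-- Exponential convergence of the trapezoidal rule for 1-periodic functions with
geometrically decaying Fourier coefficients. -/
theorem trapezoidal_exponential_convergence (f : ℝ → ℂ) (c : ℤ → ℂ) (C ρ : ℝ)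
    (hC : 0 < C) (hρ : 1 < ρ)
    (hper : Function.Periodic f 1)
    (hsum : ∀ x : ℝ, HasSum (fun m : ℤ => c m * Complex.exp (2 * Real.pi * Complex.I * m * x)) (f x))
    (habs : Summable fun m : ℤ => ‖c m‖)
    (hdecay : ∀ m : ℤ, ‖c m‖ ≤ C * ρ⁻¹ ^ m.natAbs)
    (n : ℕ) (hn : 1 ≤ n) :
    ‖(1 / (n : ℂ)) * (∑ k ∈ Finset.range n, f ((k : ℝ) / n)) - c 0‖
      ≤ 2 * C * ρ⁻¹ ^ n / (1 - ρ⁻¹ ^ n) :=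
  trapezoidal_exponential_convergence_general f c C ρ hρ hsum hdecay n hn
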